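/- Let T ⊆ S ⊆ S^n be a spherical triangle (the spherical convex hull of three points contained in S) having the center c of S as one of its vertices. Then the projection proj_{L,H}(T) of T onto H along L is spherically convex. -/
import Mathlib


open Real Set MeasureTheory Metric
open scoped RealInnerProductSpace ENNReal

noncomputable section

/-- Euclidean `(n+1)`-space; the unit sphere `S^n` is `Metric.sphere (0 : EN n) 1`. -/
abbrev EN (n : ℕ) : Type := EuclideanSpace ℝ (Fin (n + 1))

/-- The spherical distance `d_s(x,y) = arccos ⟨x,y⟩`. -/
def sphDistN (n : ℕ) (x y : EN n) : ℝ := Real.arccos ⟪x, y⟫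

/-- The shorter great-circle arc (spherical segment) joining two non-antipodal
unit vectors: the radial projection of the Euclidean segment-cone. -/
def sphSegN (n : ℕ) (x y : EN n) : Set (EN n) :=
  {z | ∃ a b : ℝ, 0 ≤ a ∧ 0 ≤ b ∧ a • x + b • y ≠ 0 ∧
      z = ‖a • x + b • y‖⁻¹ • (a • x + b • y)}

/-- A set is spherically convex if it consists of unit vectors, is contained in an
open hemisphere, and contains the shorter arc joining any two of its (non-antipodal)
points. -/
def SphConvexN (n : ℕ) (K : Set (EN n)) : Prop :=
  K ⊆ sphere (0 : EN n) 1 ∧ (∃ e : EN n, ‖e‖ = 1 ∧ ∀ x ∈ K, 0 < ⟪e, x⟫) ∧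
    ∀ x ∈ K, ∀ y ∈ K, x ≠ -y → sphSegN n x y ⊆ K

/-- Relative interior of a subset of the sphere (interior within the sphere). -/
def relIntN (n : ℕ) (K : Set (EN n)) : Set (EN n) :=
  {x | ∃ ε : ℝ, 0 < ε ∧ sphere (0 : EN n) 1 ∩ ball x ε ⊆ K}

/-- A spherical convex body: compact, spherically convex, with nonempty
(relative) interior. -/
def SphBodyN (n : ℕ) (K : Set (EN n)) : Prop :=
  IsCompact K ∧ SphConvexN n K ∧ (K ∩ relIntN n K).Nonempty

/-- The center `c` of the fixed open hemisphere `S`: the first standard basis vector. -/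
def e0 (n : ℕ) : EN n := EuclideanSpace.single 0 1

/-- The second standard basis vector, spanning (with `c`) the plane of the great
circle `L̄`. -/
def e1 (n : ℕ) : EN n := EuclideanSpace.single 1 1

/-- The fixed open hemisphere `S` centered at `c`. -/
def hemiN (n : ℕ) : Set (EN n) := {p ∈ sphere (0 : EN n) 1 | 0 < ⟪e0 n, p⟫}

/-- The point `cos θ cos φ • e₀ + cos θ sin φ • e₁ + sin θ • u` of `S`; here `θ` is
the spherical distance from the great circle `L̄` (in the plane of `e₀,e₁`), `u` is a
unit vector orthogonal to this plane, and `φ` parametrizes the distance curve. -/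
def sphPtN (n : ℕ) (θ φ : ℝ) (u : EN n) : EN n :=
  (Real.cos θ * Real.cos φ) • e0 n + (Real.cos θ * Real.sin φ) • e1 n + Real.sin θ • u

/-- `u` is a unit vector orthogonal to the plane of the great circle `L̄`. -/
def inAxisComp (n : ℕ) (u : EN n) : Prop := ‖u‖ = 1 ∧ ⟪e0 n, u⟫ = 0 ∧ ⟪e1 n, u⟫ = 0

/-- The distance curve with axis `L` at spherical distance `θ` from `L̄`, lying in the
2-dimensional great sphere through `L̄` determined by `u`; for `θ = 0` it is `L` itself. -/
def distCurveN (n : ℕ) (θ : ℝ) (u : EN n) : Set (EN n) :=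
  {p | ∃ φ ∈ Ioo (-(π/2)) (π/2), p = sphPtN n θ φ u}

/-- The set of parameters `φ` at which the distance curve determined by `(θ,u)`
meets `K`. -/
def sliceN (n : ℕ) (K : Set (EN n)) (θ : ℝ) (u : EN n) : Set ℝ :=
  {φ | φ ∈ Ioo (-(π/2)) (π/2) ∧ sphPtN n θ φ u ∈ K}

/-- The connectedness property: `X ∩ C` is connected (possibly empty or a point)
for every distance curve `C` with axis `L`. -/
def ConnPropN (n : ℕ) (X : Set (EN n)) : Prop :=
  ∀ θ : ℝ, 0 ≤ θ → θ < π/2 → ∀ u : EN n, inAxisComp n u →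
    IsPreconnected (X ∩ distCurveN n θ u)

/-- The spherical Steiner symmetral `σ_{L,H}(X)`: on each distance curve `C` with
axis `L` meeting `X`, the arc `X ∩ C` is replaced by the closed subarc of `C` of the
same arclength centered at the point `C ∩ H` (the point with parameter `φ = 0`). -/
def steinerN (n : ℕ) (X : Set (EN n)) : Set (EN n) :=
  {p | ∃ θ : ℝ, 0 ≤ θ ∧ θ < π/2 ∧ ∃ u : EN n, inAxisComp n u ∧ ∃ φ : ℝ,
      p = sphPtN n θ φ u ∧ (sliceN n X θ u).Nonempty ∧
      |φ| ≤ (sSup (sliceN n X θ u) - sInf (sliceN n X θ u)) / 2}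

/-- The projection of `X ⊆ S` onto `H` along `L`: the set of points `q ∈ H` such
that the distance curve with axis `L` through `q` meets `X`. -/
def projLH (n : ℕ) (X : Set (EN n)) : Set (EN n) :=
  {q | ∃ θ : ℝ, 0 ≤ θ ∧ θ < π/2 ∧ ∃ u : EN n, inAxisComp n u ∧
      q = sphPtN n θ 0 u ∧ (X ∩ distCurveN n θ u).Nonempty}

/-- `L = L̄ ∩ S`: the half great circle in the plane of `e₀, e₁` inside `S`. -/
def LsetN (n : ℕ) : Set (EN n) :=
  {p | ∃ φ ∈ Ioo (-(π/2)) (π/2), p = Real.cos φ • e0 n + Real.sin φ • e1 n}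

/-- The spherical convex hull: intersection of all spherically convex sets
containing the given set. -/
def sphConvexHullN (n : ℕ) (A : Set (EN n)) : Set (EN n) :=
  ⋂₀ {C | SphConvexN n C ∧ A ⊆ C}

lemma fin01 {n : ℕ} (hn : 2 ≤ n) : (0 : Fin (n+1)) ≠ 1 := by
  intro h
  have := congrArg Fin.val h
  simp [Fin.val_one'] at this
  omega

lemma h00 (n : ℕ) : ⟪e0 n, e0 n⟫ = 1 := by
  simp [e0, EuclideanSpace.inner_single_left, EuclideanSpace.single_apply]

lemma h11 (n : ℕ) : ⟪e1 n, e1 n⟫ = 1 := by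
  simp [e1, EuclideanSpace.inner_single_left, EuclideanSpace.single_apply]

lemma h01 {n : ℕ} (hn : 2 ≤ n) : ⟪e0 n, e1 n⟫ = 0 := by
  simp [e0, e1, EuclideanSpace.inner_single_left, EuclideanSpace.single_apply, (fin01 hn).symm]

lemma h10 {n : ℕ} (hn : 2 ≤ n) : ⟪e1 n, e0 n⟫ = 0 := by
  rw [real_inner_comm]; exact h01 hn

lemma norm_e0 (n : ℕ) : ‖e0 n‖ = 1 := by simp [e0, EuclideanSpace.norm_single]
lemma norm_e1 (n : ℕ) : ‖e1 n‖ = 1 := by simp [e1, EuclideanSpace.norm_single]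

/-- component orthogonal to the plane of e0,e1 -/
def pp (n : ℕ) (p : EN n) : EN n := p - ⟪e0 n, p⟫ • e0 n - ⟪e1 n, p⟫ • e1 n

lemma decomp (n : ℕ) (p : EN n) : p = ⟪e0 n, p⟫ • e0 n + ⟪e1 n, p⟫ • e1 n + pp n p := by
  simp only [pp]; abel

lemma inner_e0_pp {n : ℕ} (hn : 2 ≤ n) (p : EN n) : ⟪e0 n, pp n p⟫ = 0 := by
  simp only [pp, inner_sub_right, inner_smul_right, real_inner_smul_right, h00, h01 hn]
  ring

lemma inner_e1_pp {n : ℕ} (hn : 2 ≤ n) (p : EN n) : ⟪e1 n, pp n p⟫ = 0 := by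
  simp only [pp, inner_sub_right, inner_smul_right, real_inner_smul_right, h11, h10 hn]
  ring

lemma inner_pp_e0 {n : ℕ} (hn : 2 ≤ n) (p : EN n) : ⟪pp n p, e0 n⟫ = 0 := by
  rw [real_inner_comm]; exact inner_e0_pp hn p

lemma inner_pp_e1 {n : ℕ} (hn : 2 ≤ n) (p : EN n) : ⟪pp n p, e1 n⟫ = 0 := by
  rw [real_inner_comm]; exact inner_e1_pp hn p

lemma pp_add (n : ℕ) (x y : EN n) : pp n (x + y) = pp n x + pp n y := by
  simp only [pp, inner_add_right, add_smul]; abel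

lemma pp_smul (n : ℕ) (r : ℝ) (x : EN n) : pp n (r • x) = r • pp n x := by
  simp only [pp, inner_smul_right, smul_sub, mul_smul]

lemma norm_sq_eq {n : ℕ} (hn : 2 ≤ n) (p : EN n) :
    ‖p‖^2 = ⟪e0 n, p⟫^2 + ⟪e1 n, p⟫^2 + ‖pp n p‖^2 := by
  have h := decomp n p
  calc ‖p‖^2 = ⟪p, p⟫ := (real_inner_self_eq_norm_sq p).symm
    _ = ⟪⟪e0 n, p⟫ • e0 n + ⟪e1 n, p⟫ • e1 n + pp n p,
        ⟪e0 n, p⟫ • e0 n + ⟪e1 n, p⟫ • e1 n + pp n p⟫ := by rw [← h]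
    _ = ⟪e0 n, p⟫^2 + ⟪e1 n, p⟫^2 + ⟪pp n p, pp n p⟫ := by
        simp only [inner_add_left, inner_add_right, real_inner_smul_left, real_inner_smul_right,
          h00, h11, h01 hn, h10 hn, inner_e0_pp hn, inner_e1_pp hn,
          inner_pp_e0 hn, inner_pp_e1 hn]
        ring
    _ = _ := by rw [real_inner_self_eq_norm_sq]

lemma c0_sphPt {n : ℕ} (hn : 2 ≤ n) (θ φ : ℝ) {u : EN n} (hu : inAxisComp n u) :
    ⟪e0 n, sphPtN n θ φ u⟫ = Real.cos θ * Real.cos φ := by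
  simp only [sphPtN, inner_add_right, real_inner_smul_right, h00, h01 hn, hu.2.1]
  ring

lemma c1_sphPt {n : ℕ} (hn : 2 ≤ n) (θ φ : ℝ) {u : EN n} (hu : inAxisComp n u) :
    ⟪e1 n, sphPtN n θ φ u⟫ = Real.cos θ * Real.sin φ := by
  simp only [sphPtN, inner_add_right, real_inner_smul_right, h11, h10 hn, hu.2.2]
  ring

lemma pp_sphPt {n : ℕ} (hn : 2 ≤ n) (θ φ : ℝ) {u : EN n} (hu : inAxisComp n u) :
    pp n (sphPtN n θ φ u) = Real.sin θ • u := by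
  unfold pp
  rw [c0_sphPt hn θ φ hu, c1_sphPt hn θ φ hu]
  simp only [sphPtN]
  abel

lemma norm_sphPt {n : ℕ} (hn : 2 ≤ n) (θ φ : ℝ) {u : EN n} (hu : inAxisComp n u) :
    ‖sphPtN n θ φ u‖ = 1 := by
  have h2 : ‖sphPtN n θ φ u‖^2 = 1 := by
    rw [norm_sq_eq hn, c0_sphPt hn θ φ hu, c1_sphPt hn θ φ hu, pp_sphPt hn θ φ hu,
      norm_smul, hu.1]
    simp only [Real.norm_eq_abs, mul_one]
    have h3 := Real.sin_sq_add_cos_sq θ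
    have h4 := Real.sin_sq_add_cos_sq φ
    rw [mul_pow, mul_pow, sq_abs]
    nlinarith
  calc ‖sphPtN n θ φ u‖ = Real.sqrt (‖sphPtN n θ φ u‖^2) := (Real.sqrt_sq (norm_nonneg _)).symm
    _ = 1 := by rw [h2, Real.sqrt_one]



lemma sqrt_pair_subadd (p q p' q' : ℝ) :
    Real.sqrt ((p+p')^2+(q+q')^2) ≤ Real.sqrt (p^2+q^2) + Real.sqrt (p'^2+q'^2) := by
  have hA := Real.sq_sqrt (show (0:ℝ) ≤ p^2+q^2 by positivity)
  have hB := Real.sq_sqrt (show (0:ℝ) ≤ p'^2+q'^2 by positivity)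
  have hA0 := Real.sqrt_nonneg (p^2+q^2)
  have hB0 := Real.sqrt_nonneg (p'^2+q'^2)
  have hcs : p*p'+q*q' ≤ Real.sqrt (p^2+q^2) * Real.sqrt (p'^2+q'^2) := by
    have hM0 : 0 ≤ Real.sqrt (p^2+q^2) * Real.sqrt (p'^2+q'^2) := mul_nonneg hA0 hB0
    have hM2 : (p*p'+q*q')^2 ≤ (Real.sqrt (p^2+q^2) * Real.sqrt (p'^2+q'^2))^2 := by
      rw [mul_pow, hA, hB]; nlinarith [sq_nonneg (p*q'-q*p')]
    nlinarith
  have h := Real.sqrt_le_sqrt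
    (show (p+p')^2+(q+q')^2 ≤ (Real.sqrt (p^2+q^2) + Real.sqrt (p'^2+q'^2))^2 by nlinarith)
  rwa [Real.sqrt_sq (by positivity)] at h

lemma sqrt_pair_smul (c p q : ℝ) (hc : 0 ≤ c) :
    Real.sqrt ((c*p)^2+(c*q)^2) = c * Real.sqrt (p^2+q^2) := by
  rw [show (c*p)^2+(c*q)^2 = c^2*(p^2+q^2) by ring, Real.sqrt_mul (sq_nonneg c),
    Real.sqrt_sq hc]

/-- The cone over `{e0, a, b}` intersected with the sphere. -/
def Kc (n : ℕ) (a b : EN n) : Set (EN n) :=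
  {z | ∃ s t r : ℝ, 0 ≤ s ∧ 0 ≤ t ∧ 0 ≤ r ∧ s • e0 n + t • a + r • b ≠ 0 ∧
    z = ‖s • e0 n + t • a + r • b‖⁻¹ • (s • e0 n + t • a + r • b)}

def fab (n : ℕ) (a b : EN n) (t r : ℝ) : ℝ :=
  Real.sqrt ((t * ⟪e0 n, a⟫ + r * ⟪e0 n, b⟫)^2 + (t * ⟪e1 n, a⟫ + r * ⟪e1 n, b⟫)^2)

/-- Explicit description of the projection of the triangle. -/
def Gs (n : ℕ) (a b : EN n) : Set (EN n) :=
  {q | ‖q‖ = 1 ∧ 0 < ⟪e0 n, q⟫ ∧ ⟪e1 n, q⟫ = 0 ∧ ∃ t r : ℝ, 0 ≤ t ∧ 0 ≤ r ∧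
    pp n q = t • pp n a + r • pp n b ∧ fab n a b t r ≤ ⟪e0 n, q⟫}

lemma c0_comb {n : ℕ} (hn : 2 ≤ n) (s t r : ℝ) (a b : EN n) :
    ⟪e0 n, s • e0 n + t • a + r • b⟫ = s + t * ⟪e0 n, a⟫ + r * ⟪e0 n, b⟫ := by
  simp only [inner_add_right, real_inner_smul_right, h00]; ring

lemma c1_comb {n : ℕ} (hn : 2 ≤ n) (s t r : ℝ) (a b : EN n) :
    ⟪e1 n, s • e0 n + t • a + r • b⟫ = t * ⟪e1 n, a⟫ + r * ⟪e1 n, b⟫ := by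
  simp only [inner_add_right, real_inner_smul_right, h10 hn]; ring

lemma pp_e0 {n : ℕ} (hn : 2 ≤ n) : pp n (e0 n) = 0 := by
  simp only [pp, h00, h10 hn, one_smul, zero_smul, sub_zero, sub_self]

lemma pp_comb {n : ℕ} (hn : 2 ≤ n) (s t r : ℝ) (a b : EN n) :
    pp n (s • e0 n + t • a + r • b) = t • pp n a + r • pp n b := by
  rw [pp_add, pp_add, pp_smul, pp_smul, pp_smul, pp_e0 hn, smul_zero, zero_add]

lemma norm_mem_hemi {n : ℕ} {a : EN n} (ha : a ∈ hemiN n) : ‖a‖ = 1 := by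
  have := ha.1
  rwa [mem_sphere_iff_norm, sub_zero] at this

lemma comb_c0_pos {n : ℕ} (hn : 2 ≤ n) {s t r : ℝ} {a b : EN n}
    (ha : a ∈ hemiN n) (hb : b ∈ hemiN n) (hs : 0 ≤ s) (ht : 0 ≤ t) (hr : 0 ≤ r)
    (hv : s • e0 n + t • a + r • b ≠ 0) :
    0 < s + t * ⟪e0 n, a⟫ + r * ⟪e0 n, b⟫ := by
  have ha0 : 0 < ⟪e0 n, a⟫ := ha.2
  have hb0 : 0 < ⟪e0 n, b⟫ := hb.2
  rcases lt_or_eq_of_le (show 0 ≤ s + t * ⟪e0 n, a⟫ + r * ⟪e0 n, b⟫ by positivity) with h | h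
  · exact h
  · exfalso
    have hs0 : s = 0 := by nlinarith
    have ht0 : t = 0 := by nlinarith
    have hr0 : r = 0 := by nlinarith
    apply hv
    rw [hs0, ht0, hr0]
    simp



lemma mem_Kc_norm {n : ℕ} {a b : EN n} {z : EN n} (hz : z ∈ Kc n a b) : ‖z‖ = 1 := by
  obtain ⟨s, t, r, hs, ht, hr, hv, hzeq⟩ := hz
  rw [hzeq, norm_smul, Real.norm_eq_abs, abs_of_nonneg (by positivity),
    inv_mul_cancel₀ (norm_ne_zero_iff.2 hv)]

lemma mem_Kc_c0 {n : ℕ} (hn : 2 ≤ n) {a b : EN n} (ha : a ∈ hemiN n) (hb : b ∈ hemiN n)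
    {z : EN n} (hz : z ∈ Kc n a b) : 0 < ⟪e0 n, z⟫ := by
  obtain ⟨s, t, r, hs, ht, hr, hv, hzeq⟩ := hz
  rw [hzeq, real_inner_smul_right, c0_comb hn]
  have h1 := comb_c0_pos hn ha hb hs ht hr hv
  have h2 : 0 < ‖s • e0 n + t • a + r • b‖ := norm_pos_iff.2 hv
  positivity

lemma K_convex {n : ℕ} (hn : 2 ≤ n) {a b : EN n} (ha : a ∈ hemiN n) (hb : b ∈ hemiN n) :
    SphConvexN n (Kc n a b) := by
  refine ⟨fun z hz => ?_, ⟨e0 n, norm_e0 n, fun z hz => mem_Kc_c0 hn ha hb hz⟩, ?_⟩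
  · rw [mem_sphere_iff_norm, sub_zero]; exact mem_Kc_norm hz
  · rintro x hx y hy hxy z hz
    obtain ⟨s1, t1, r1, hs1, ht1, hr1, hv1, hx1⟩ := hx
    obtain ⟨s2, t2, r2, hs2, ht2, hr2, hv2, hy1⟩ := hy
    obtain ⟨α, β, hα, hβ, hne, hzeq⟩ := hz
    set v := s1 • e0 n + t1 • a + r1 • b with hv
    set w := s2 • e0 n + t2 • a + r2 • b with hw
    have hNv : (0:ℝ) < ‖v‖ := norm_pos_iff.2 hv1
    have hNw : (0:ℝ) < ‖w‖ := norm_pos_iff.2 hv2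
    have key : α • x + β • y
        = (α * ‖v‖⁻¹ * s1 + β * ‖w‖⁻¹ * s2) • e0 n
          + (α * ‖v‖⁻¹ * t1 + β * ‖w‖⁻¹ * t2) • a
          + (α * ‖v‖⁻¹ * r1 + β * ‖w‖⁻¹ * r2) • b := by
      rw [hx1, hy1, hv, hw]
      module
    refine ⟨α * ‖v‖⁻¹ * s1 + β * ‖w‖⁻¹ * s2, α * ‖v‖⁻¹ * t1 + β * ‖w‖⁻¹ * t2,
      α * ‖v‖⁻¹ * r1 + β * ‖w‖⁻¹ * r2, by positivity, by positivity, by positivity,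
      ?_, ?_⟩
    · rw [← key]; exact hne
    · rw [← key]; exact hzeq


lemma e0_mem_Kc {n : ℕ} {a b : EN n} : e0 n ∈ Kc n a b := by
  refine ⟨1, 0, 0, zero_le_one, le_refl 0, le_refl 0, ?_, ?_⟩
  · rw [show (1:ℝ) • e0 n + (0:ℝ) • a + (0:ℝ) • b = e0 n by module]
    exact norm_ne_zero_iff.1 (by rw [norm_e0]; norm_num)
  · rw [show (1:ℝ) • e0 n + (0:ℝ) • a + (0:ℝ) • b = e0 n by module, norm_e0]
    norm_num

lemma mem_Kc_self {n : ℕ} {a b : EN n} (ha : a ∈ hemiN n) : a ∈ Kc n a b := by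
  have hna : ‖a‖ = 1 := norm_mem_hemi ha
  have hane : a ≠ 0 := norm_ne_zero_iff.1 (by rw [hna]; norm_num)
  refine ⟨0, 1, 0, le_refl 0, zero_le_one, le_refl 0, ?_, ?_⟩
  · rw [show (0:ℝ) • e0 n + (1:ℝ) • a + (0:ℝ) • b = a by module]
    exact hane
  · rw [show (0:ℝ) • e0 n + (1:ℝ) • a + (0:ℝ) • b = a by module, hna]
    norm_num

lemma mem_Kc_self' {n : ℕ} {a b : EN n} (hb : b ∈ hemiN n) : b ∈ Kc n a b := by
  have hnb : ‖b‖ = 1 := norm_mem_hemi hb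
  have hbne : b ≠ 0 := norm_ne_zero_iff.1 (by rw [hnb]; norm_num)
  refine ⟨0, 0, 1, le_refl 0, le_refl 0, zero_le_one, ?_, ?_⟩
  · rw [show (0:ℝ) • e0 n + (0:ℝ) • a + (1:ℝ) • b = b by module]
    exact hbne
  · rw [show (0:ℝ) • e0 n + (0:ℝ) • a + (1:ℝ) • b = b by module, hnb]
    norm_num

lemma hull_eq {n : ℕ} (hn : 2 ≤ n) {a b : EN n} (ha : a ∈ hemiN n) (hb : b ∈ hemiN n) :
    sphConvexHullN n {e0 n, a, b} = Kc n a b := by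
  apply Set.Subset.antisymm
  · exact Set.sInter_subset_of_mem ⟨K_convex hn ha hb, by
      intro x hx
      rcases hx with h | h | h
      · rw [h]; exact e0_mem_Kc
      · rw [h]; exact mem_Kc_self ha
      · rw [h]; exact mem_Kc_self' hb⟩
  · intro z hz
    rintro C ⟨hC, hsub⟩
    obtain ⟨s, t, r, hs, ht, hr, hvne, hzeq⟩ := hz
    have he0C : e0 n ∈ C := hsub (by left; rfl)
    have haC : a ∈ C := hsub (by right; left; rfl)
    have hbC : b ∈ C := hsub (by right; right; rfl)
    have ha0 : 0 < ⟪e0 n, a⟫ := ha.2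
    have hb0 : 0 < ⟪e0 n, b⟫ := hb.2
    set w := t • a + r • b with hw
    by_cases hw0 : w = 0
    · -- then t = r = 0 and z = e0
      have hv : s • e0 n + t • a + r • b = s • e0 n + w := by rw [hw]; module
      have hsne : s ≠ 0 := by
        intro h
        apply hvne
        rw [hv, hw0, h, zero_smul, add_zero]
      have hspos : 0 < s := lt_of_le_of_ne hs (Ne.symm hsne)
      have : z = e0 n := by
        rw [hzeq, hv, hw0, add_zero, norm_smul, Real.norm_eq_abs, abs_of_pos hspos,
          norm_e0, mul_one, smul_smul, inv_mul_cancel₀ hsne, one_smul]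
      rw [this]; exact he0C
    · -- w ≠ 0; first a,b arc gives z1, then e0,z1 arc gives z
      have hanb : a ≠ -b := by
        intro h
        rw [h, inner_neg_right] at ha0
        linarith
      set z1 := ‖w‖⁻¹ • w with hz1
      have hz1C : z1 ∈ C := hC.2.2 a haC b hbC hanb ⟨t, r, ht, hr, hw0, rfl⟩
      have hNw : (0:ℝ) < ‖w‖ := norm_pos_iff.2 hw0
      have hrec : s • e0 n + ‖w‖ • z1 = s • e0 n + t • a + r • b := by
        rw [hz1, smul_smul, mul_inv_cancel₀ (ne_of_gt hNw), one_smul, hw]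
        module
      have hc0w : 0 ≤ ⟪e0 n, w⟫ := by
        rw [hw, inner_add_right, real_inner_smul_right, real_inner_smul_right]
        positivity
      have he0nz1 : e0 n ≠ -z1 := by
        intro h
        have h1 : ⟪e0 n, e0 n⟫ = ⟪e0 n, -z1⟫ := by rw [← h]
        rw [h00, inner_neg_right, hz1, real_inner_smul_right] at h1
        have : (0:ℝ) ≤ ‖w‖⁻¹ * ⟪e0 n, w⟫ := by positivity
        linarith
      have : z ∈ sphSegN n (e0 n) z1 := by
        refine ⟨s, ‖w‖, hs, le_of_lt hNw, ?_, ?_⟩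
        · rw [hrec]; exact hvne
        · rw [hrec]; exact hzeq
      exact hC.2.2 (e0 n) he0C z1 hz1C he0nz1 this


set_option maxHeartbeats 1000000 in
lemma proj_sub_G {n : ℕ} (hn : 2 ≤ n) {a b : EN n} (ha : a ∈ hemiN n) (hb : b ∈ hemiN n) :
    projLH n (Kc n a b) ⊆ Gs n a b := by
  rintro q ⟨θ, hθ0, hθπ, u, hu, hqeq, p, hpK, hpC⟩
  have hcosθ : 0 < Real.cos θ := Real.cos_pos_of_mem_Ioo
    ⟨by linarith [Real.pi_div_two_pos], hθπ⟩
  have hnq : ‖q‖ = 1 := by rw [hqeq]; exact norm_sphPt hn θ 0 hu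
  have hc0q : ⟪e0 n, q⟫ = Real.cos θ := by
    rw [hqeq, c0_sphPt hn θ 0 hu, Real.cos_zero, mul_one]
  have hc1q : ⟪e1 n, q⟫ = 0 := by
    rw [hqeq, c1_sphPt hn θ 0 hu, Real.sin_zero, mul_zero]
  have hppq : pp n q = Real.sin θ • u := by rw [hqeq]; exact pp_sphPt hn θ 0 hu
  obtain ⟨φ, hφ, hpeq⟩ := hpC
  obtain ⟨sc, tc, rc, hsc, htc, hrc, hvne, hpKeq⟩ := hpK
  set v := sc • e0 n + tc • a + rc • b with hv
  have hNv : (0:ℝ) < ‖v‖ := norm_pos_iff.2 hvne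
  -- components of p two ways
  have hc0p : Real.cos θ * Real.cos φ = ‖v‖⁻¹ * (sc + tc * ⟪e0 n, a⟫ + rc * ⟪e0 n, b⟫) := by
    rw [← c0_sphPt hn θ φ hu, ← hpeq, hpKeq, real_inner_smul_right, c0_comb hn]
  have hc1p : Real.cos θ * Real.sin φ = ‖v‖⁻¹ * (tc * ⟪e1 n, a⟫ + rc * ⟪e1 n, b⟫) := by
    rw [← c1_sphPt hn θ φ hu, ← hpeq, hpKeq, real_inner_smul_right, c1_comb hn]
  have hppp : Real.sin θ • u = (‖v‖⁻¹ * tc) • pp n a + (‖v‖⁻¹ * rc) • pp n b := by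
    rw [← pp_sphPt hn θ φ hu, ← hpeq, hpKeq, pp_smul, pp_comb hn, smul_add,
      smul_smul, smul_smul]
  refine ⟨hnq, by rw [hc0q]; exact hcosθ, hc1q, ‖v‖⁻¹ * tc, ‖v‖⁻¹ * rc,
    by positivity, by positivity, by rw [hppq]; exact hppp, ?_⟩
  -- the sqrt bound
  rw [hc0q]
  set A := tc * ⟪e0 n, a⟫ + rc * ⟪e0 n, b⟫ with hA
  set B := tc * ⟪e1 n, a⟫ + rc * ⟪e1 n, b⟫ with hB
  have hA0 : 0 ≤ A := by
    have := ha.2; have := hb.2; rw [hA]; positivity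
  have hfab : fab n a b (‖v‖⁻¹ * tc) (‖v‖⁻¹ * rc) = Real.sqrt ((‖v‖⁻¹*A)^2 + (‖v‖⁻¹*B)^2) := by
    rw [fab, hA, hB]; ring_nf
  rw [hfab]
  have hsq : (‖v‖⁻¹*A)^2 + (‖v‖⁻¹*B)^2 ≤ (Real.cos θ)^2 := by
    have key : (Real.cos θ)^2 = (‖v‖⁻¹ * (sc + A))^2 + (‖v‖⁻¹ * B)^2 := by
      have hid := Real.sin_sq_add_cos_sq φ
      calc (Real.cos θ)^2 = (Real.cos θ * Real.cos φ)^2 + (Real.cos θ * Real.sin φ)^2 := by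
            linear_combination (-(Real.cos θ)^2) * hid
        _ = _ := by rw [hc0p, hc1p, hA, hB]; ring
    have hvinv : (0:ℝ) ≤ ‖v‖⁻¹ := by positivity
    have h1 : (‖v‖⁻¹*A)^2 ≤ (‖v‖⁻¹ * (sc + A))^2 := by
      nlinarith [mul_nonneg hvinv hsc, mul_nonneg hvinv hA0]
    linarith [key.le, sq_nonneg (‖v‖⁻¹ * B)]
  calc Real.sqrt ((‖v‖⁻¹*A)^2 + (‖v‖⁻¹*B)^2) ≤ Real.sqrt ((Real.cos θ)^2) :=
        Real.sqrt_le_sqrt hsq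
    _ = Real.cos θ := Real.sqrt_sq (le_of_lt hcosθ)


lemma fin20 {n : ℕ} (hn : 2 ≤ n) : (⟨2, by omega⟩ : Fin (n+1)) ≠ 0 := by
  apply Fin.ne_of_val_ne
  show (2:ℕ) ≠ (0 : Fin (n+1)).val
  simp

lemma fin21 {n : ℕ} (hn : 2 ≤ n) : (⟨2, by omega⟩ : Fin (n+1)) ≠ 1 := by
  apply Fin.ne_of_val_ne
  show (2:ℕ) ≠ (1 : Fin (n+1)).val
  rw [Fin.val_one', Nat.mod_eq_of_lt (by omega)]
  omega

lemma inAxis_u2 {n : ℕ} (hn : 2 ≤ n) :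
    inAxisComp n (EuclideanSpace.single (⟨2, by omega⟩ : Fin (n+1)) 1) := by
  refine ⟨by simp [EuclideanSpace.norm_single], ?_, ?_⟩
  · rw [e0, EuclideanSpace.inner_single_left, EuclideanSpace.single_apply,
      if_neg (fun h => fin20 hn h.symm)]
    simp
  · rw [e1, EuclideanSpace.inner_single_left, EuclideanSpace.single_apply,
      if_neg (fun h => fin21 hn h.symm)]
    simp

lemma sphPt00 {n : ℕ} (u : EN n) : sphPtN n 0 0 u = e0 n := by
  simp [sphPtN]

set_option maxHeartbeats 1000000 in
lemma G_sub_proj {n : ℕ} (hn : 2 ≤ n) {a b : EN n} (ha : a ∈ hemiN n) (hb : b ∈ hemiN n) :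
    Gs n a b ⊆ projLH n (Kc n a b) := by
  rintro q ⟨hnq, hc0, hc1, t, r, ht, hr, hppq, hf⟩
  have hφ0 : (0:ℝ) ∈ Ioo (-(π/2)) (π/2) :=
    ⟨by linarith [Real.pi_div_two_pos], Real.pi_div_two_pos⟩
  have hppnorm : ‖pp n q‖^2 = 1 - ⟪e0 n, q⟫^2 := by
    have := norm_sq_eq hn q
    rw [hnq, hc1] at this
    nlinarith
  by_cases hq' : pp n q = 0
  · -- q = e0
    have hc0one : ⟪e0 n, q⟫ = 1 := by
      have h1 : ⟪e0 n, q⟫^2 = 1 := by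
        rw [hq', norm_zero] at hppnorm
        linarith [hppnorm]
      calc ⟪e0 n, q⟫ = Real.sqrt (⟪e0 n, q⟫^2) := (Real.sqrt_sq hc0.le).symm
        _ = 1 := by rw [h1, Real.sqrt_one]
    have hqe0 : q = e0 n := by
      have := decomp n q
      rw [hc0one, hc1, hq', one_smul, zero_smul, add_zero, add_zero] at this
      exact this
    refine ⟨0, le_refl 0, Real.pi_div_two_pos, _, inAxis_u2 hn, ?_, ⟨e0 n, e0_mem_Kc, ?_⟩⟩
    · rw [hqe0, sphPt00]
    · exact ⟨0, hφ0, (sphPt00 _).symm⟩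
  · -- main case
    set c0 := ⟪e0 n, q⟫ with hc0def
    set m := ‖pp n q‖ with hm
    have hmpos : 0 < m := norm_pos_iff.2 hq'
    have hm1 : m < 1 := by nlinarith
    set θ := Real.arcsin m with hθ
    have hθ0 : 0 ≤ θ := Real.arcsin_nonneg.2 hmpos.le
    have hθπ : θ < π/2 := Real.arcsin_lt_pi_div_two.2 hm1
    have hsinθ : Real.sin θ = m := Real.sin_arcsin (by linarith) hm1.le
    have hcosθ : Real.cos θ = c0 := by
      rw [hθ, Real.cos_arcsin]
      have : 1 - m^2 = c0^2 := by rw [hppnorm]; ring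
      rw [this, Real.sqrt_sq hc0.le]
    set u := m⁻¹ • pp n q with hu
    have hui : inAxisComp n u := by
      refine ⟨?_, ?_, ?_⟩
      · rw [hu, norm_smul, Real.norm_eq_abs, abs_of_pos (by positivity), ← hm,
          inv_mul_cancel₀ (ne_of_gt hmpos)]
      · rw [hu, real_inner_smul_right, inner_e0_pp hn, mul_zero]
      · rw [hu, real_inner_smul_right, inner_e1_pp hn, mul_zero]
    have hsu : Real.sin θ • u = pp n q := by
      rw [hsinθ, hu, smul_smul, mul_inv_cancel₀ (ne_of_gt hmpos), one_smul]
    have hqeq : q = sphPtN n θ 0 u := by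
      have h1 : sphPtN n θ 0 u = c0 • e0 n + pp n q := by
        rw [sphPtN, Real.cos_zero, Real.sin_zero, hcosθ, hsu, mul_one, mul_zero]
        module
      rw [h1]
      nth_rewrite 1 [decomp n q]
      rw [hc1, zero_smul, add_zero]
    set A := t * ⟪e0 n, a⟫ + r * ⟪e0 n, b⟫ with hA
    set B := t * ⟪e1 n, a⟫ + r * ⟪e1 n, b⟫ with hB
    have hA0 : 0 ≤ A := by
      have := ha.2; have := hb.2; rw [hA]; positivity
    have hfAB : Real.sqrt (A^2 + B^2) ≤ c0 := hf
    have hAB : A^2 + B^2 ≤ c0^2 := by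
      have h1 := Real.sq_sqrt (show (0:ℝ) ≤ A^2+B^2 by positivity)
      nlinarith [Real.sqrt_nonneg (A^2+B^2)]
    set X := Real.sqrt (c0^2 - B^2) with hX
    have hX2 : X^2 = c0^2 - B^2 := Real.sq_sqrt (by nlinarith [sq_nonneg A])
    have hXA : A ≤ X := by
      calc A = Real.sqrt (A^2) := (Real.sqrt_sq hA0).symm
        _ ≤ X := Real.sqrt_le_sqrt (by nlinarith [sq_nonneg B])
    have hXpos : 0 < X := by
      rcases lt_or_eq_of_le (Real.sqrt_nonneg (c0^2 - B^2)) with h | h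
      · exact h
      · exfalso
        have hX0 : X = 0 := h.symm
        have hA00 : A = 0 := le_antisymm (hX0 ▸ hXA) hA0
        have ht0 : t = 0 := by
          rcases lt_or_eq_of_le ht with h' | h'
          · exfalso
            have := mul_pos h' ha.2
            have := mul_nonneg hr hb.2.le
            rw [hA] at hA00; linarith
          · exact h'.symm
        have hr0 : r = 0 := by
          rcases lt_or_eq_of_le hr with h' | h'
          · exfalso
            have := mul_pos h' hb.2
            have := mul_nonneg ht ha.2.le
            rw [hA] at hA00; linarith
          · exact h'.symm
        apply hq'
        rw [hppq, ht0, hr0, zero_smul, zero_smul, add_zero]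
    set sc := X - A with hsc
    have hsc0 : 0 ≤ sc := by rw [hsc]; linarith
    set v := sc • e0 n + t • a + r • b with hv
    have hc0v : ⟪e0 n, v⟫ = X := by rw [hv, c0_comb hn, hsc, hA]; ring
    have hc1v : ⟪e1 n, v⟫ = B := by rw [hv, c1_comb hn, ← hB]
    have hppv : pp n v = pp n q := by rw [hv, pp_comb hn, ← hppq]
    have hnv : ‖v‖ = 1 := by
      have h1 : ‖v‖^2 = 1 := by
        rw [norm_sq_eq hn v, hc0v, hc1v, hppv, ← hm]
        nlinarith
      calc ‖v‖ = Real.sqrt (‖v‖^2) := (Real.sqrt_sq (norm_nonneg v)).symm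
        _ = 1 := by rw [h1, Real.sqrt_one]
    have hvne : v ≠ 0 := by
      intro h; rw [h, norm_zero] at hnv; norm_num at hnv
    have hvK : v ∈ Kc n a b := by
      refine ⟨sc, t, r, hsc0, ht, hr, by rw [← hv]; exact hvne, ?_⟩
      rw [← hv, hnv, inv_one, one_smul]
    have hBabs : |B| < c0 := by
      rw [abs_lt]
      constructor <;> nlinarith [hX2, mul_pos hXpos hXpos]
    have hB1 : B / c0 < 1 := (div_lt_one hc0).2 (lt_of_abs_lt hBabs)
    have hB2 : -1 < B / c0 := by
      rw [lt_div_iff₀ hc0]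
      have := neg_lt_of_abs_lt hBabs
      linarith
    set φ := Real.arcsin (B / c0) with hφ
    have hφmem : φ ∈ Ioo (-(π/2)) (π/2) :=
      ⟨Real.neg_pi_div_two_lt_arcsin.2 hB2, Real.arcsin_lt_pi_div_two.2 hB1⟩
    have hsinφ : Real.sin φ = B / c0 := Real.sin_arcsin hB2.le hB1.le
    have hcosφ : Real.cos φ = X / c0 := by
      rw [hφ, Real.cos_arcsin]
      have h1 : 1 - (B/c0)^2 = (X/c0)^2 := by
        field_simp
        linarith [hX2]
      rw [h1, Real.sqrt_sq (by positivity)]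
    have hveq : v = sphPtN n θ φ u := by
      have e1' : Real.cos θ * Real.cos φ = X := by
        rw [hcosθ, hcosφ]; field_simp
      have e2' : Real.cos θ * Real.sin φ = B := by
        rw [hcosθ, hsinφ]; field_simp
      have h1 : sphPtN n θ φ u = X • e0 n + B • e1 n + pp n q := by
        rw [sphPtN, e1', e2', hsu]
      have h2 : v = X • e0 n + B • e1 n + pp n q := by
        nth_rewrite 1 [decomp n v]
        rw [hc0v, hc1v, hppv]
      rw [h1, h2]
    exact ⟨θ, hθ0, hθπ, u, hui, hqeq, ⟨v, hvK, ⟨φ, hφmem, hveq⟩⟩⟩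


lemma fab_smul {n : ℕ} (a b : EN n) (c t r : ℝ) (hc : 0 ≤ c) :
    fab n a b (c*t) (c*r) = c * fab n a b t r := by
  rw [fab, fab,
    show (c*t) * ⟪e0 n, a⟫ + (c*r) * ⟪e0 n, b⟫ = c * (t * ⟪e0 n, a⟫ + r * ⟪e0 n, b⟫) by ring,
    show (c*t) * ⟪e1 n, a⟫ + (c*r) * ⟪e1 n, b⟫ = c * (t * ⟪e1 n, a⟫ + r * ⟪e1 n, b⟫) by ring]
  exact sqrt_pair_smul c _ _ hc

lemma fab_add {n : ℕ} (a b : EN n) (t r t' r' : ℝ) :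
    fab n a b (t+t') (r+r') ≤ fab n a b t r + fab n a b t' r' := by
  rw [fab, fab, fab,
    show (t+t') * ⟪e0 n, a⟫ + (r+r') * ⟪e0 n, b⟫
      = (t * ⟪e0 n, a⟫ + r * ⟪e0 n, b⟫) + (t' * ⟪e0 n, a⟫ + r' * ⟪e0 n, b⟫) by ring,
    show (t+t') * ⟪e1 n, a⟫ + (r+r') * ⟪e1 n, b⟫
      = (t * ⟪e1 n, a⟫ + r * ⟪e1 n, b⟫) + (t' * ⟪e1 n, a⟫ + r' * ⟪e1 n, b⟫) by ring]
  exact sqrt_pair_subadd _ _ _ _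

lemma G_convex {n : ℕ} (hn : 2 ≤ n) {a b : EN n} (ha : a ∈ hemiN n) (hb : b ∈ hemiN n) :
    SphConvexN n (Gs n a b) := by
  refine ⟨fun q hq => ?_, ⟨e0 n, norm_e0 n, fun q hq => hq.2.1⟩, ?_⟩
  · rw [mem_sphere_iff_norm, sub_zero]; exact hq.1
  · rintro x ⟨hnx, hx0, hx1, t1, r1, ht1, hr1, hpx, hfx⟩
      y ⟨hny, hy0, hy1, t2, r2, ht2, hr2, hpy, hfy⟩ hxy z ⟨α, β, hα, hβ, hne, hzeq⟩
    set w := α • x + β • y with hw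
    have hNw : (0:ℝ) < ‖w‖ := norm_pos_iff.2 hne
    have hnz : ‖z‖ = 1 := by
      rw [hzeq, norm_smul, Real.norm_eq_abs, abs_of_nonneg (by positivity),
        inv_mul_cancel₀ (ne_of_gt hNw)]
    have hc0z : ⟪e0 n, z⟫ = ‖w‖⁻¹ * (α * ⟪e0 n, x⟫ + β * ⟪e0 n, y⟫) := by
      rw [hzeq, real_inner_smul_right, hw, inner_add_right, real_inner_smul_right,
        real_inner_smul_right]
    have hc1z : ⟪e1 n, z⟫ = 0 := by
      rw [hzeq, real_inner_smul_right, hw, inner_add_right, real_inner_smul_right,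
        real_inner_smul_right, hx1, hy1]
      ring
    have hcomb : 0 < α * ⟪e0 n, x⟫ + β * ⟪e0 n, y⟫ := by
      rcases lt_or_eq_of_le hα with h | h
      · have h1 := mul_pos h hx0
        have h2 := mul_nonneg hβ hy0.le
        linarith
      · have hβ' : 0 < β := by
          rcases lt_or_eq_of_le hβ with h' | h'
          · exact h'
          · exfalso; apply hne; rw [hw, ← h, ← h', zero_smul, zero_smul, add_zero]
        have h1 := mul_pos hβ' hy0
        have h2 := mul_nonneg hα hx0.le
        linarith
    have hppz : pp n z = (‖w‖⁻¹ * (α * t1 + β * t2)) • pp n a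
        + (‖w‖⁻¹ * (α * r1 + β * r2)) • pp n b := by
      rw [hzeq, pp_smul, hw, pp_add, pp_smul, pp_smul, hpx, hpy]
      module
    refine ⟨hnz, by rw [hc0z]; positivity, hc1z,
      ‖w‖⁻¹ * (α * t1 + β * t2), ‖w‖⁻¹ * (α * r1 + β * r2),
      by positivity, by positivity, hppz, ?_⟩
    have hstep : fab n a b (α * t1 + β * t2) (α * r1 + β * r2)
        ≤ α * ⟪e0 n, x⟫ + β * ⟪e0 n, y⟫ := by
      calc fab n a b (α * t1 + β * t2) (α * r1 + β * r2)
          ≤ fab n a b (α * t1) (α * r1) + fab n a b (β * t2) (β * r2) := fab_add a b _ _ _ _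
        _ = α * fab n a b t1 r1 + β * fab n a b t2 r2 := by
            rw [fab_smul a b α t1 r1 hα, fab_smul a b β t2 r2 hβ]
        _ ≤ α * ⟪e0 n, x⟫ + β * ⟪e0 n, y⟫ := by
            have h1 := mul_le_mul_of_nonneg_left hfx hα
            have h2 := mul_le_mul_of_nonneg_left hfy hβ
            linarith
    calc fab n a b (‖w‖⁻¹ * (α * t1 + β * t2)) (‖w‖⁻¹ * (α * r1 + β * r2))
        = ‖w‖⁻¹ * fab n a b (α * t1 + β * t2) (α * r1 + β * r2) :=
          fab_smul a b _ _ _ (by positivity)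
      _ ≤ ‖w‖⁻¹ * (α * ⟪e0 n, x⟫ + β * ⟪e0 n, y⟫) :=
          mul_le_mul_of_nonneg_left hstep (by positivity)
      _ = ⟪e0 n, z⟫ := hc0z.symm

/-- The projection onto `H` along `L` of any spherical triangle
contained in `S` having the center `c` of `S` as a vertex is spherically convex. -/
theorem projLH_triangle_convex (n : ℕ) (hn : 2 ≤ n) (a b : EN n)
    (ha : a ∈ hemiN n) (hb : b ∈ hemiN n) :
    SphConvexN n (projLH n (sphConvexHullN n {e0 n, a, b})) := by
  rw [hull_eq hn ha hb,
    Set.Subset.antisymm (proj_sub_G hn ha hb) (G_sub_proj hn ha hb)]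
  exact G_convex hn ha hb
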